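/- Let p_t be the lognormal density of exponential Brownian motion, a(t) = ψ^{-1}(Kψ(t)), K ∈ (0,1), c ∈ (0,K), and define η(t,y)² = y² · (p_t(y) − c a'(t) p_{a(t)}(y))/(p_t(y) − c p_{a(t)}(y)) for y > 0. Then y² ≤ η(t,y)² ≤ y² · K/(K−c) for all t > 0, y > 0. -/

import Mathlib

open Real

/-- The lognormal density of exponential Brownian motion at time `t`. -/
noncomputable def ebmDensity (t x : ℝ) : ℝ :=
  (1 / Real.sqrt (2 * Real.pi)) * (Real.exp (-t / 8) / Real.sqrt t) *
    (Real.exp (-(Real.log x) ^ 2 / (2 * t)) / x ^ ((3 : ℝ) / 2))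

/-- The normalizing function `ψ(t) = √t e^{t/8}`. -/
noncomputable def psi (t : ℝ) : ℝ := Real.sqrt t * Real.exp (t / 8)

/-- `φ(t) = (t+4)/(8t)`, so that `a'(t) = φ(t)/φ(a(t))`. -/
noncomputable def phi (t : ℝ) : ℝ := (t + 4) / (8 * t)

/-!
Since `ψ(t) p_t(y) = e^{-(log y)²/(2t)} / (√(2π) y^{3/2})` is nondecreasing in `t`, and
`ψ(a(t)) = K ψ(t) < ψ(t)` forces `a(t) < t`, we get `K p_{a(t)}(y) ≤ p_t(y)`. As `φ` is
decreasing, also `0 < a'(t) = φ(t)/φ(a(t)) ≤ 1`. Writing `p = p_t(y)`, `q = p_{a(t)}(y)` and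
`r = a'(t)`, both bounds are then elementary inequalities for `(p - c r q)/(p - c q)`.
-/

lemma psi_pos {t : ℝ} (ht : 0 < t) : 0 < psi t := by
  unfold psi; positivity

lemma psi_monotoneOn : MonotoneOn psi (Set.Ici 0) := fun _ _ _ _ hst =>
  mul_le_mul (Real.sqrt_le_sqrt hst) (Real.exp_le_exp.2 (by linarith))
    (Real.exp_pos _).le (Real.sqrt_nonneg _)

lemma lt_of_psi_eq_mul {K s t : ℝ} (hK : K < 1) (hs : 0 < s) (ht : 0 < t)
    (h : psi s = K * psi t) : s < t :=
  psi_monotoneOn.reflect_lt hs.le ht.le (by nlinarith [psi_pos ht])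

lemma phi_pos {t : ℝ} (ht : 0 < t) : 0 < phi t := by
  unfold phi; positivity

lemma phi_antitoneOn : AntitoneOn phi (Set.Ioi 0) := fun s hs t _ hst => by
  unfold phi
  rw [div_le_div_iff₀ (by linarith [hs.out]) (by linarith [hs.out])]
  nlinarith [hs.out]

lemma psi_mul_ebmDensity {t : ℝ} (ht : 0 < t) (y : ℝ) :
    psi t * ebmDensity t y =
      Real.exp (-(Real.log y) ^ 2 / (2 * t)) / (Real.sqrt (2 * Real.pi) * y ^ ((3 : ℝ) / 2)) := by
  have hexp : Real.exp (-t / 8) = (Real.exp (t / 8))⁻¹ := by rw [neg_div, Real.exp_neg]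
  have hsqrt : Real.sqrt t ≠ 0 := (Real.sqrt_pos.2 ht).ne'
  unfold psi ebmDensity
  rw [hexp]
  field_simp

lemma psi_mul_ebmDensity_mono {s t y : ℝ} (hs : 0 < s) (hst : s ≤ t) (hy : 0 ≤ y) :
    psi s * ebmDensity s y ≤ psi t * ebmDensity t y := by
  rw [psi_mul_ebmDensity hs, psi_mul_ebmDensity (hs.trans_le hst)]
  have := Real.rpow_nonneg hy ((3 : ℝ) / 2)
  gcongr ?_ / _
  rw [Real.exp_le_exp, neg_div, neg_div, neg_le_neg_iff]
  gcongr

lemma ebmDensity_pos {t y : ℝ} (ht : 0 < t) (hy : 0 < y) : 0 < ebmDensity t y := by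
  unfold ebmDensity
  have := Real.sqrt_pos.2 ht
  positivity

lemma mul_ebmDensity_le_of_psi_eq {K s t y : ℝ} (hs : 0 < s) (hst : s ≤ t) (hy : 0 ≤ y)
    (h : psi s = K * psi t) : K * ebmDensity s y ≤ ebmDensity t y := by
  have hmono := psi_mul_ebmDensity_mono hs hst hy
  rw [h, mul_assoc, mul_left_comm] at hmono
  exact le_of_mul_le_mul_left hmono (psi_pos (hs.trans_le hst))

lemma one_le_div_sub_mul_and_le {p q r c K : ℝ} (hq : 0 < q) (hc : 0 < c) (hcK : c < K)
    (hKq : K * q ≤ p) (hr₀ : 0 ≤ r) (hr₁ : r ≤ 1) :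
    1 ≤ (p - c * r * q) / (p - c * q) ∧ (p - c * r * q) / (p - c * q) ≤ K / (K - c) := by
  have hden : 0 < p - c * q := by nlinarith
  constructor
  · rw [one_le_div hden]
    nlinarith [mul_nonneg hc.le (mul_nonneg (sub_nonneg.2 hr₁) hq.le)]
  · rw [div_le_div_iff₀ hden (by linarith)]
    nlinarith [mul_nonneg hc.le (sub_nonneg.2 hKq),
      mul_nonneg (mul_nonneg hc.le hr₀) (mul_nonneg (sub_nonneg.2 hcK.le) hq.le)]

/-- Bounds `y² ≤ η(t,y)² ≤ y² K/(K−c)` on the Dupire local volatility for the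
fake exponential Brownian motion, where `a` is characterized by `ψ(a t) = K ψ(t)`
and `a'(t) = φ(t)/φ(a(t))`. -/
theorem fakeEBM_eta_sq_bounds {c K : ℝ} (hc : 0 < c) (hcK : c < K) (hK : K < 1)
    (a : ℝ → ℝ) (ha_pos : ∀ t > 0, 0 < a t)
    (ha : ∀ t > 0, psi (a t) = K * psi t) :
    ∀ t > (0 : ℝ), ∀ y > (0 : ℝ),
      y ^ 2 ≤ y ^ 2 * ((ebmDensity t y - c * (phi t / phi (a t)) * ebmDensity (a t) y) /
            (ebmDensity t y - c * ebmDensity (a t) y)) ∧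
      y ^ 2 * ((ebmDensity t y - c * (phi t / phi (a t)) * ebmDensity (a t) y) /
            (ebmDensity t y - c * ebmDensity (a t) y)) ≤ y ^ 2 * (K / (K - c)) := by
  intro t ht y hy
  have has : 0 < a t := ha_pos t ht
  have hat : a t < t := lt_of_psi_eq_mul hK has ht (ha t ht)
  have hKq : K * ebmDensity (a t) y ≤ ebmDensity t y :=
    mul_ebmDensity_le_of_psi_eq has hat.le hy.le (ha t ht)
  have hr₀ : 0 ≤ phi t / phi (a t) := (div_pos (phi_pos ht) (phi_pos has)).le
  have hr₁ : phi t / phi (a t) ≤ 1 :=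
    (div_le_one (phi_pos has)).2 (phi_antitoneOn has ht hat.le)
  obtain ⟨hlower, hupper⟩ :=
    one_le_div_sub_mul_and_le (ebmDensity_pos has hy) hc hcK hKq hr₀ hr₁
  exact ⟨le_mul_of_one_le_right (sq_nonneg y) hlower,
    mul_le_mul_of_nonneg_left hupper (sq_nonneg y)⟩
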